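/- Let P̂ ∈ ℝ^{k×k} be a row-stochastic matrix obtained from normalized importance sampling, M ∈ ℝ^{k×d} full row rank, and N_NIS = P̂ M restricted appropriately so that N_NIS M† = P̂. Then ‖N_NIS M†‖_∞ = 1 ≤ 1, and consequently (with 0 ≤ γ < 1, suitable η and window size m) the over-parameterized target TD iterates with NIS correction converge to θ* = M†(I − γ N_NIS M†)⁻¹ R + (I − M†M)θ₀. -/

import Mathlib

open Matrix Filter Topology

noncomputable def specRad {n : Type*} [Fintype n] [DecidableEq n] (A : Matrix n n ℝ) : ℝ :=
  sSup ((fun z : ℂ => ‖z‖) '' spectrum ℂ (A.map fun x => (x : ℂ)))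

noncomputable def pinv {k d : ℕ} (M : Matrix (Fin k) (Fin d) ℝ) : Matrix (Fin d) (Fin k) ℝ :=
  Mᵀ * (M * Mᵀ)⁻¹

noncomputable def rowSumNorm {m n : ℕ} (A : Matrix (Fin m) (Fin n) ℝ) : ℝ :=
  ⨆ i, ∑ j, |A i j|

/-! With `Q = M†` we have `M * Q = 1`, hence `N * Q = P̂`, which is row stochastic. The window
of `m` inner steps telescopes, `η Mᵀ (∑_{i<m} (1 - η D M Mᵀ)^i) D = Q (1 - E)` with
`E = (1 - η M Mᵀ D)^m`, so the update is `θ ↦ (1 - Q A M) θ + Q b` with `A = (1 - E)(1 - γ P̂)` and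
`b = (1 - E) R`. Such an update leaves `(1 - Q M) θ` fixed and moves `M θ` by the affine map
`u ↦ (1 - A) u + b`. Since `σ(1 - X Y) = σ(1 - Y X)`, the spectral hypothesis says that
`ρ(1 - A) < 1`; by Gelfand's formula `(1 - A)^n → 0`, so `M θ → A⁻¹ b` and
`θ → Q A⁻¹ b + (1 - Q M) θ₀`. -/

theorem mul_geom_sum_one_sub_mul_mul {R : Type*} [Ring R] (a b : R) (m : ℕ) :
    a * (∑ i ∈ Finset.range m, (1 - b * a) ^ i) * b = 1 - (1 - a * b) ^ m := by
  have hsemi : SemiconjBy a (1 - b * a) (1 - a * b) := by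
    simp only [SemiconjBy, mul_sub, sub_mul, mul_one, one_mul, mul_assoc]
  induction m with
  | zero => simp
  | succ m ih =>
    rw [Finset.sum_range_succ, mul_add, add_mul, ih, (hsemi.pow_right m).eq, pow_succ]
    noncomm_ring

theorem tendsto_pow_atTop_nhds_zero_of_spectralRadius_lt_one {A : Type*} [NormedRing A]
    [NormedAlgebra ℂ A] [CompleteSpace A] {a : A} (ha : spectralRadius ℂ a < 1) :
    Tendsto (a ^ ·) atTop (𝓝 0) := by
  obtain ⟨r, hρr, hr1⟩ := ENNReal.lt_iff_exists_nnreal_btwn.1 ha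
  have hbound : ∀ᶠ n : ℕ in atTop, ‖a ^ n‖₊ ≤ r ^ n := by
    filter_upwards [(spectrum.pow_nnnorm_pow_one_div_tendsto_nhds_spectralRadius
      a).eventually_lt_const hρr, eventually_gt_atTop 0] with n hn hn0
    have hpow := ENNReal.rpow_lt_rpow hn (Nat.cast_pos.2 hn0)
    rw [← ENNReal.rpow_mul, one_div_mul_cancel (by positivity), ENNReal.rpow_one,
      ENNReal.rpow_natCast] at hpow
    exact_mod_cast hpow.le
  exact squeeze_zero_norm' (hbound.mono fun n hn => by exact_mod_cast hn)
    (tendsto_pow_atTop_nhds_zero_of_lt_one r.2 (by exact_mod_cast hr1))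

section Matrix

variable {n : Type*} [Fintype n] [DecidableEq n]

theorem spectrum_mul_comm {K : Type*} [Field K] (A B : Matrix n n K) :
    spectrum K (A * B) = spectrum K (B * A) := by
  ext r
  rw [mem_spectrum_iff_isRoot_charpoly, mem_spectrum_iff_isRoot_charpoly, charpoly_mul_comm]

theorem spectrum_one_sub_mul_comm {K : Type*} [Field K] (A B : Matrix n n K) :
    spectrum K (1 - A * B) = spectrum K (1 - B * A) := by
  rw [← map_one (algebraMap K (Matrix n n K)), ← spectrum.singleton_sub_eq,
    ← spectrum.singleton_sub_eq, spectrum_mul_comm]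

theorem mul_inv_mulVec_mulVec_cancel_left {K : Type*} [CommRing K] {X Y : Matrix n n K}
    (hXY : IsUnit (X * Y)) (v : n → K) : (X * Y)⁻¹ *ᵥ (X *ᵥ v) = Y⁻¹ *ᵥ v := by
  have hX : IsUnit X.det := isUnit_of_mul_isUnit_left <| by
    rw [← det_mul, ← isUnit_iff_isUnit_det]; exact hXY
  rw [Matrix.mul_inv_rev, mulVec_mulVec, Matrix.mul_assoc, nonsing_inv_mul _ hX, Matrix.mul_one]

theorem specRad_one_sub_mul_comm (A B : Matrix n n ℝ) :
    specRad (1 - A * B) = specRad (1 - B * A) := by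
  have hmap : ∀ C D : Matrix n n ℝ, (1 - C * D).map (fun x => (x : ℂ)) =
      1 - C.map (fun x => (x : ℂ)) * D.map (fun x => (x : ℂ)) := fun C D => by
    change Complex.ofRealHom.mapMatrix _ = _
    rw [map_sub, map_one, map_mul]
    rfl
  rw [specRad, specRad, hmap, hmap, spectrum_one_sub_mul_comm]

section Gelfand

-- Any Banach-algebra norm serves here: neither the spectrum nor the limits depend on it.
attribute [local instance] Matrix.linftyOpNormedRing Matrix.linftyOpNormedAlgebra

theorem spectralRadius_map_ofReal_le_specRad (G : Matrix n n ℝ) :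
    spectralRadius ℂ (G.map fun x => (x : ℂ)) ≤ ENNReal.ofReal (specRad G) := by
  have hbdd :=
    ((spectrum.isCompact (𝕜 := ℂ) (G.map fun x => (x : ℂ))).image continuous_norm).bddAbove
  refine iSup₂_le fun z hz => ?_
  rw [← ENNReal.ofReal_coe_nnreal, coe_nnnorm]
  exact ENNReal.ofReal_le_ofReal (le_csSup hbdd ⟨z, hz, rfl⟩)

theorem tendsto_pow_atTop_nhds_zero_of_specRad_lt_one {G : Matrix n n ℝ} (hG : specRad G < 1) :
    Tendsto (G ^ ·) atTop (𝓝 0) := by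
  have hρ : spectralRadius ℂ (G.map fun x => (x : ℂ)) < 1 :=
    (spectralRadius_map_ofReal_le_specRad G).trans_lt (by simpa using hG)
  have hre : Continuous fun C : Matrix n n ℂ => C.map Complex.re :=
    continuous_id.matrix_map Complex.continuous_re
  have := (hre.tendsto 0).comp (tendsto_pow_atTop_nhds_zero_of_spectralRadius_lt_one hρ)
  convert this using 1
  · ext N : 1
    change G ^ N = (Complex.ofRealHom.mapMatrix G ^ N).map Complex.re
    rw [← map_pow]
    ext i j
    simp
  · simp

end Gelfand

theorem isUnit_one_sub_of_tendsto_pow_zero {G : Matrix n n ℝ}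
    (hG : Tendsto (G ^ ·) atTop (𝓝 0)) : IsUnit (1 - G) := by
  refine mulVec_injective_iff_isUnit.1 fun v w hvw => ?_
  suffices ∀ u, (1 - G) *ᵥ u = 0 → u = 0 from
    sub_eq_zero.1 (this _ (by rw [mulVec_sub, hvw, sub_self]))
  intro u hu
  rw [sub_mulVec, one_mulVec, sub_eq_zero, eq_comm] at hu
  have hfix : ∀ N : ℕ, (G ^ N) *ᵥ u = u := by
    intro N
    induction N with
    | zero => simp
    | succ N ih => rw [pow_succ, ← mulVec_mulVec, hu, ih]
  have hlim : Tendsto (fun N : ℕ => (G ^ N) *ᵥ u) atTop (𝓝 (0 *ᵥ u)) :=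
    ((continuous_id.matrix_mulVec continuous_const).tendsto 0).comp hG
  rw [zero_mulVec] at hlim
  simp only [hfix] at hlim
  exact tendsto_nhds_unique tendsto_const_nhds hlim

theorem tendsto_affine_iterate {G : Matrix n n ℝ} (hG : Tendsto (G ^ ·) atTop (𝓝 0))
    (c : n → ℝ) {u : ℕ → n → ℝ} (hu : ∀ N, u (N + 1) = G *ᵥ u N + c) :
    Tendsto u atTop (𝓝 ((1 - G)⁻¹ *ᵥ c)) := by
  set u' := (1 - G)⁻¹ *ᵥ c
  have hfix : G *ᵥ u' + c = u' := by
    have : (1 - G) *ᵥ u' = c := by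
      rw [mulVec_mulVec, mul_nonsing_inv _ ((isUnit_iff_isUnit_det _).1
        (isUnit_one_sub_of_tendsto_pow_zero hG)), one_mulVec]
    rw [← this, sub_mulVec, one_mulVec]
    abel
  have herr : ∀ N, u N = u' + (G ^ N) *ᵥ (u 0 - u') := by
    intro N
    induction N with
    | zero => simp
    | succ N ih =>
      rw [hu, ih, mulVec_add, mulVec_mulVec _ G (G ^ N), ← pow_succ', add_right_comm, hfix]
  have hlim : Tendsto (fun N : ℕ => u' + (G ^ N) *ᵥ (u 0 - u')) atTop
      (𝓝 (u' + 0 *ᵥ (u 0 - u'))) :=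
    ((continuous_const.add (continuous_id.matrix_mulVec continuous_const)).tendsto 0).comp hG
  rw [zero_mulVec, add_zero] at hlim
  exact hlim.congr fun N => (herr N).symm

end Matrix

section Lifted

variable {m n : Type*} [Fintype m] [DecidableEq m] [Fintype n] [DecidableEq n]

theorem tendsto_lifted_affine_iterate {M : Matrix m n ℝ} {Q : Matrix n m ℝ} (hMQ : M * Q = 1)
    {A : Matrix m m ℝ} (hA : Tendsto ((1 - A) ^ ·) atTop (𝓝 0)) (b : m → ℝ)
    {θ : ℕ → n → ℝ} (hθ : ∀ N, θ (N + 1) = (1 - Q * A * M) *ᵥ θ N + Q *ᵥ b) :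
    Tendsto θ atTop (𝓝 (Q *ᵥ (A⁻¹ *ᵥ b) + (1 - Q * M) *ᵥ θ 0)) := by
  have hstep : M * (1 - Q * A * M) = (1 - A) * M := by
    rw [Matrix.mul_sub, Matrix.mul_one, ← Matrix.mul_assoc, ← Matrix.mul_assoc, hMQ,
      Matrix.one_mul, Matrix.sub_mul, Matrix.one_mul]
  have hQ : (1 - Q * M) * Q = 0 := by
    rw [Matrix.sub_mul, Matrix.one_mul, Matrix.mul_assoc, hMQ, Matrix.mul_one, sub_self]
  have hker_step : (1 - Q * M) * (1 - Q * A * M) = 1 - Q * M := by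
    rw [Matrix.mul_sub (1 - Q * M), Matrix.mul_one, ← Matrix.mul_assoc, ← Matrix.mul_assoc, hQ,
      Matrix.zero_mul, Matrix.zero_mul, sub_zero]
  have hproj : ∀ N, M *ᵥ θ (N + 1) = (1 - A) *ᵥ (M *ᵥ θ N) + b := fun N => by
    rw [hθ, mulVec_add, mulVec_mulVec, mulVec_mulVec, mulVec_mulVec, hstep, hMQ, one_mulVec]
  have hker : ∀ N, (1 - Q * M) *ᵥ θ N = (1 - Q * M) *ᵥ θ 0 := by
    intro N
    induction N with
    | zero => rfl
    | succ N ih =>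
      rw [← ih, hθ, mulVec_add, mulVec_mulVec, mulVec_mulVec, hQ, hker_step, zero_mulVec,
        add_zero]
  have hdecomp : ∀ N, θ N = Q *ᵥ (M *ᵥ θ N) + (1 - Q * M) *ᵥ θ 0 := fun N => by
    rw [← hker N, mulVec_mulVec, ← add_mulVec, add_sub_cancel, one_mulVec]
  have hcont : Continuous fun v => Q *ᵥ v + (1 - Q * M) *ᵥ θ 0 :=
    (continuous_const.matrix_mulVec continuous_id).add continuous_const
  have hlim := (hcont.tendsto _).comp
    (tendsto_affine_iterate (u := fun N => M *ᵥ θ N) hA b hproj)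
  rw [sub_sub_cancel] at hlim
  exact hlim.congr fun N => (hdecomp N).symm

end Lifted

theorem mul_pinv {k d : ℕ} {M : Matrix (Fin k) (Fin d) ℝ} (hM : IsUnit (M * Mᵀ)) :
    M * pinv M = 1 := by
  rw [pinv, ← Matrix.mul_assoc, Matrix.mul_nonsing_inv _ ((isUnit_iff_isUnit_det _).1 hM)]

theorem pinv_mul_mul_transpose_mul {k d n : ℕ} {M : Matrix (Fin k) (Fin d) ℝ}
    (hM : IsUnit (M * Mᵀ)) (X : Matrix (Fin k) (Fin n) ℝ) : pinv M * (M * Mᵀ * X) = Mᵀ * X := by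
  rw [pinv, Matrix.mul_assoc,
    Matrix.nonsing_inv_mul_cancel_left _ _ ((isUnit_iff_isUnit_det _).1 hM)]

theorem rowSumNorm_eq_one_of_mem_rowStochastic {k : ℕ} [NeZero k]
    {P : Matrix (Fin k) (Fin k) ℝ} (hP : P ∈ rowStochastic ℝ (Fin k)) : rowSumNorm P = 1 := by
  have hrow : ∀ i, ∑ j, |P i j| = 1 := fun i => by
    simp_rw [abs_of_nonneg (nonneg_of_mem_rowStochastic hP)]
    exact sum_row_of_mem_rowStochastic hP i
  rw [rowSumNorm, iSup_congr hrow, ciSup_const]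

theorem stmt14_general {k d : ℕ} [NeZero k] (M N : Matrix (Fin k) (Fin d) ℝ)
    (Phat : Matrix (Fin k) (Fin k) ℝ)
    (hP0 : ∀ i j, 0 ≤ Phat i j) (hP1 : ∀ i, ∑ j, Phat i j = 1)
    (hM : IsUnit (M * Mᵀ))
    (hN : N = Phat * M)
    (D : Matrix (Fin k) (Fin k) ℝ)
    (γ : ℝ)
    (η : ℝ)
    (m : ℕ)
    (hmρ : specRad (γ • (N * pinv M) +
      (1 - γ • (N * pinv M)) * (1 - η • (M * Mᵀ * D)) ^ m) < 1)
    (R : Fin k → ℝ) (θ : ℕ → Fin d → ℝ)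
    (hrec : ∀ n : ℕ, θ (n + 1) =
      (1 - η • (Mᵀ * (∑ i ∈ Finset.range m, (1 - η • (D * M * Mᵀ)) ^ i) * D *
        (M - γ • N))).mulVec (θ n) +
      η • (Mᵀ * (∑ i ∈ Finset.range m, (1 - η • (D * M * Mᵀ)) ^ i) * D).mulVec R) :
    N * pinv M = Phat ∧ rowSumNorm (N * pinv M) = 1 ∧
    Tendsto θ atTop (nhds
      ((pinv M).mulVec ((1 - γ • (N * pinv M))⁻¹.mulVec R) +
        (1 - pinv M * M).mulVec (θ 0))) := by
  have hMQ := mul_pinv hM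
  have hNQ : N * pinv M = Phat := by rw [hN, Matrix.mul_assoc, hMQ, Matrix.mul_one]
  refine ⟨hNQ, hNQ ▸ rowSumNorm_eq_one_of_mem_rowStochastic
    (mem_rowStochastic_iff_sum.2 ⟨hP0, hP1⟩), ?_⟩
  have hwindow : η • (Mᵀ * (∑ i ∈ Finset.range m, (1 - η • (D * M * Mᵀ)) ^ i) * D) =
      pinv M * (1 - (1 - η • (M * Mᵀ * D)) ^ m) := by
    rw [← pinv_mul_mul_transpose_mul hM]
    simpa only [Matrix.smul_mul, Matrix.mul_smul, Matrix.mul_assoc] using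
      congrArg (pinv M * ·) (mul_geom_sum_one_sub_mul_mul (M * Mᵀ) (η • D) m)
  set E := (1 - η • (M * Mᵀ * D)) ^ m
  have hA : Tendsto ((1 - (1 - E) * (1 - γ • Phat)) ^ ·) atTop (𝓝 0) := by
    refine tendsto_pow_atTop_nhds_zero_of_specRad_lt_one ?_
    rw [specRad_one_sub_mul_comm]
    convert hmρ using 2
    rw [hNQ]
    noncomm_ring
  have hθ : ∀ n, θ (n + 1) = (1 - pinv M * ((1 - E) * (1 - γ • Phat)) * M) *ᵥ θ n +
      pinv M *ᵥ ((1 - E) *ᵥ R) := fun n => by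
    have hfactor : M - γ • N = (1 - γ • Phat) * M := by
      rw [hN, Matrix.sub_mul, Matrix.one_mul, Matrix.smul_mul]
    rw [hrec, ← smul_mulVec, ← Matrix.smul_mul, hwindow, hfactor, mulVec_mulVec]
    simp only [Matrix.mul_assoc]
  have hunit : IsUnit ((1 - E) * (1 - γ • Phat)) := by
    simpa only [sub_sub_cancel] using isUnit_one_sub_of_tendsto_pow_zero hA
  have := tendsto_lifted_affine_iterate hMQ hA _ hθ
  rwa [mul_inv_mulVec_mulVec_cancel_left hunit, ← hNQ] at this

theorem stmt14 {k d : ℕ} [NeZero k] (M N : Matrix (Fin k) (Fin d) ℝ)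
    (Phat : Matrix (Fin k) (Fin k) ℝ)
    (hP0 : ∀ i j, 0 ≤ Phat i j) (hP1 : ∀ i, ∑ j, Phat i j = 1)
    (hM : IsUnit (M * Mᵀ))
    (hN : N = Phat * M)
    (D : Matrix (Fin k) (Fin k) ℝ)
    (hDdiag : ∀ i j, i ≠ j → D i j = 0) (hDpos : ∀ i, 0 < D i i)
    (γ : ℝ) (hγ0 : 0 ≤ γ) (hγ1 : γ < 1)
    (η : ℝ) (hη : 0 < η) (hρ : η * specRad (M * Mᵀ * D) < 1)
    (m : ℕ) (hm : 1 ≤ m)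
    (hmρ : specRad (γ • (N * pinv M) +
      (1 - γ • (N * pinv M)) * (1 - η • (M * Mᵀ * D)) ^ m) < 1)
    (R : Fin k → ℝ) (θ : ℕ → Fin d → ℝ)
    (hrec : ∀ n : ℕ, θ (n + 1) =
      (1 - η • (Mᵀ * (∑ i ∈ Finset.range m, (1 - η • (D * M * Mᵀ)) ^ i) * D *
        (M - γ • N))).mulVec (θ n) +
      η • (Mᵀ * (∑ i ∈ Finset.range m, (1 - η • (D * M * Mᵀ)) ^ i) * D).mulVec R) :
    N * pinv M = Phat ∧ rowSumNorm (N * pinv M) = 1 ∧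
    Tendsto θ atTop (nhds
      ((pinv M).mulVec ((1 - γ • (N * pinv M))⁻¹.mulVec R) +
        (1 - pinv M * M).mulVec (θ 0))) :=
  stmt14_general M N Phat hP0 hP1 hM hN D γ η m hmρ R θ hrec
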